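/- arXiv:2205.15630 — 2 statements merged into one kernel-verified Lean document; each statement's English description precedes it below -/
import Mathlib

section
/- For the Deterministic Accumulate-and-Dump (DAD) policy with period τ ≥ 1 over n time slots, the support of the output sequence Y^n has cardinality 2^⌊n/τ⌋, and hence the maximal leakage equals ⌊n/τ⌋ · log 2. -/
lemma card_filter_dvd (n τ : ℕ) :
    (Finset.univ.filter (fun i : Fin n => τ ∣ ((i : ℕ) + 1))).card = n / τ := by
  rw [← Nat.Ioc_filter_dvd_card_eq_div n τ]
  refine Finset.card_bij (fun (i : Fin n) (_ : i ∈ Finset.univ.filter (fun i : Fin n => τ ∣ ((i : ℕ) + 1))) => (i : ℕ) + 1) ?_ ?_ ?_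
  · intro i hi
    simp only [Finset.mem_filter, Finset.mem_Ioc, Finset.mem_univ, true_and] at hi ⊢
    exact ⟨⟨Nat.succ_pos _, i.2⟩, hi⟩
  · intro a ha b hb h
    exact Fin.ext (by simpa using h)
  · intro b hb
    simp only [Finset.mem_filter, Finset.mem_Ioc] at hb
    refine ⟨⟨b - 1, by omega⟩, ?_, by simp; omega⟩
    simp only [Finset.mem_filter, Finset.mem_univ, true_and]
    have : b - 1 + 1 = b := by omega
    rw [this]; exact hb.2

lemma card_support (n τ : ℕ) :
    Nat.card {y : Fin n → Fin 2 // ∀ i : Fin n, ¬ (τ ∣ ((i : ℕ) + 1)) → y i = 0}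
      = 2 ^ (n / τ) := by
  have e : {y : Fin n → Fin 2 // ∀ i : Fin n, ¬ (τ ∣ ((i : ℕ) + 1)) → y i = 0} ≃
      ({i : Fin n // τ ∣ ((i : ℕ) + 1)} → Fin 2) :=
    { toFun := fun y i => y.1 i.1
      invFun := fun f => ⟨fun i => if h : τ ∣ ((i : ℕ) + 1) then f ⟨i, h⟩ else 0,
        fun i hi => by simp [hi]⟩
      left_inv := by
        intro ⟨y, hy⟩
        ext i
        by_cases h : τ ∣ ((i : ℕ) + 1)
        · simp [h]
        · simp [h, hy i h]
      right_inv := by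
        intro f
        ext ⟨i, hi⟩
        simp [hi] }
  rw [Nat.card_congr e, Nat.card_eq_fintype_card, Fintype.card_fun, Fintype.card_fin,
    Fintype.card_subtype, card_filter_dvd]

/-- For the DAD policy with period `τ ≥ 1` over `n` slots, the support of `Y^n`
(sequences that are zero at every slot whose index is not a multiple of `τ`)
has cardinality `2^⌊n/τ⌋`, hence the maximal leakage equals `⌊n/τ⌋ · log 2`. -/
theorem DAD_support_card_and_leakage (n τ : ℕ) (hτ : 1 ≤ τ) :
    Nat.card {y : Fin n → Fin 2 // ∀ i : Fin n, ¬ (τ ∣ ((i : ℕ) + 1)) → y i = 0}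
      = 2 ^ (n / τ) ∧
    Real.log ((Nat.card {y : Fin n → Fin 2 //
        ∀ i : Fin n, ¬ (τ ∣ ((i : ℕ) + 1)) → y i = 0} : ℕ) : ℝ)
      = (n / τ : ℕ) * Real.log 2 := by
  refine ⟨card_support n τ, ?_⟩
  rw [card_support n τ]
  push_cast
  rw [Real.log_pow]
end

section
/- For the same maximal leakage rate, the DAD server achieves strictly lower age than the RAD server whenever τ ≥ 2: if μ = 2^{1/τ} − 1 (so that log(1+μ) = (log 2)/τ, equating leakage rates), then (τ+1)/2 < 1/μ = 1/(2^{1/τ} − 1) for all integers τ ≥ 2. -/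
/-- Equating leakage rates via `μ = 2^{1/τ} − 1` (so `log(1+μ) = (log 2)/τ`), the DAD age
term is strictly smaller than the RAD age term for all integers `τ ≥ 2`:
`(τ+1)/2 < 1/μ`. -/
theorem DAD_beats_RAD (τ : ℕ) (hτ : 2 ≤ τ) (μ : ℝ)
    (hμ : μ = (2 : ℝ) ^ ((1 : ℝ) / τ) - 1) :
    Real.log (1 + μ) = Real.log 2 / τ ∧ ((τ : ℝ) + 1) / 2 < 1 / μ := by
  have hτR : (2 : ℝ) ≤ (τ : ℝ) := by exact_mod_cast hτ
  have hτpos : (0 : ℝ) < τ := by linarith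
  have hτ0 : (τ : ℝ) ≠ 0 := ne_of_gt hτpos
  have hx1 : (1 : ℝ) < (2 : ℝ) ^ ((1 : ℝ) / τ) := by
    rw [Real.one_lt_rpow_iff_of_pos (by norm_num)]
    exact Or.inl ⟨one_lt_two, by positivity⟩
  have hμpos : 0 < μ := by rw [hμ]; linarith
  constructor
  · rw [hμ]
    have : (1 : ℝ) + ((2 : ℝ) ^ ((1 : ℝ) / τ) - 1) = (2 : ℝ) ^ ((1 : ℝ) / τ) := by ring
    rw [this, Real.log_rpow (by norm_num)]
    ring
  · -- key: μ < 2/(τ+1)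
    have hkey : μ < 2 / ((τ : ℝ) + 1) := by
      have hlt : (2 : ℝ) ^ ((1 : ℝ) / τ) < 1 + 2 / ((τ : ℝ) + 1) := by
        have ha : (0 : ℝ) < 1 + 2 / ((τ : ℝ) + 1) := by positivity
        have hpow : (2 : ℝ) < (1 + 2 / ((τ : ℝ) + 1)) ^ τ := by
          have hnn : (0 : ℝ) ≤ 2 / ((τ : ℝ) + 1) := by positivity
          have hb := one_add_mul_le_pow (a := 2 / ((τ : ℝ) + 1)) (by linarith) τ
          have h1 : (1 : ℝ) < (τ : ℝ) * (2 / ((τ : ℝ) + 1)) := by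
            rw [show (τ : ℝ) * (2 / ((τ : ℝ) + 1)) = 2 * τ / ((τ : ℝ) + 1) from by ring,
              lt_div_iff₀ (by linarith)]
            linarith
          linarith
        by_contra h
        push_neg at h
        have hxp : (1 + 2 / ((τ : ℝ) + 1)) ^ τ ≤ ((2 : ℝ) ^ ((1 : ℝ) / τ)) ^ τ :=
          pow_le_pow_left₀ (le_of_lt ha) h τ
        have heq : ((2 : ℝ) ^ ((1 : ℝ) / τ)) ^ τ = 2 := by
          rw [← Real.rpow_natCast ((2 : ℝ) ^ ((1 : ℝ) / τ)) τ,
            ← Real.rpow_mul (by norm_num)]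
          rw [one_div, inv_mul_cancel₀ hτ0, Real.rpow_one]
        rw [heq] at hxp
        linarith
      rw [hμ]; linarith
    rw [div_lt_div_iff₀ two_pos hμpos]
    have h2 := (lt_div_iff₀ (show (0:ℝ) < (τ:ℝ)+1 by linarith)).mp hkey
    nlinarith
end
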